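/- Let z ∈ ℂ with Re(z) > 0 and let V : [0,∞) → ℂ be continuous with ∫₀^∞ |V(x)| e^{2 Re(z) x} dx < ∞. Then there exists exactly one twice continuously differentiable function f : [0,∞) → ℂ satisfying f″(x) − (V(x) + z²) f(x) = 0 for all x ≥ 0 and f(x) = e^{z x} + o(e^{−Re(z) x}) as x → ∞. -/

import Mathlib

open MeasureTheory Complex Real Set Filter

/-- `f` is a resonance solution: it is twice continuously differentiable on `[0,∞)`,
satisfies `f'' - (V + z²) f = 0` there, and `f(x) = e^{zx} + o(e^{-Re(z)x})`
as `x → ∞`. -/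
def IsResonanceSolution (V : ℝ → ℂ) (z : ℂ) (f : ℝ → ℂ) : Prop :=
  ContDiffOn ℝ 2 f (Set.Ici (0 : ℝ)) ∧
  (∀ x ∈ Set.Ici (0 : ℝ),
    iteratedDerivWithin 2 f (Set.Ici (0 : ℝ)) x - (V x + z ^ 2) * f x = 0) ∧
  Tendsto (fun x : ℝ => (f x - Complex.exp (z * x)) * Real.exp (z.re * x))
    atTop (nhds 0)


open scoped Topology

lemma split_tail {E : Type*} [NormedAddCommGroup E] [NormedSpace ℝ E]
    {ψ : ℝ → E} (hψ : IntegrableOn ψ (Ioi 0) volume) {x : ℝ} (hx : 0 ≤ x) :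
    ∫ t in Ioi x, ψ t = (∫ t in Ioi 0, ψ t) - ∫ t in (0:ℝ)..x, ψ t := by
  have hu : Ioc 0 x ∪ Ioi x = Ioi (0:ℝ) := Ioc_union_Ioi_eq_Ioi hx
  have h1 : IntegrableOn ψ (Ioc 0 x) volume :=
    hψ.mono_set (by rw [← hu]; exact subset_union_left)
  have h2 : IntegrableOn ψ (Ioi x) volume :=
    hψ.mono_set (by rw [← hu]; exact subset_union_right)
  have h3 := setIntegral_union (Set.Ioc_disjoint_Ioi le_rfl) measurableSet_Ioi h1 h2
  rw [hu] at h3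
  rw [intervalIntegral.integral_of_le hx, h3]
  abel

lemma tendsto_tail {E : Type*} [NormedAddCommGroup E] [NormedSpace ℝ E]
    {ψ : ℝ → E} (hψ : IntegrableOn ψ (Ioi 0) volume) :
    Tendsto (fun x => ∫ t in Ioi x, ψ t) atTop (𝓝 0) := by
  have h := intervalIntegral_tendsto_integral_Ioi (μ := volume) 0 hψ (tendsto_id (α := ℝ))
  have h2 : Tendsto (fun x : ℝ => (∫ t in Ioi 0, ψ t) - ∫ t in (0:ℝ)..x, ψ t) atTop
      (𝓝 ((∫ t in Ioi 0, ψ t) - ∫ t in Ioi 0, ψ t)) := tendsto_const_nhds.sub h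
  rw [sub_self] at h2
  refine h2.congr' ?_
  filter_upwards [eventually_ge_atTop (0:ℝ)] with x hx
  exact (split_tail hψ hx).symm

lemma bounded_of_tendsto {E : Type*} [NormedAddCommGroup E] {φ : ℝ → E}
    (hc : ContinuousOn φ (Ici 0)) (ht : Tendsto φ atTop (𝓝 0)) :
    ∃ C : ℝ, 0 ≤ C ∧ ∀ x, 0 ≤ x → ‖φ x‖ ≤ C := by
  have h1 : ∀ᶠ x in atTop, ‖φ x‖ < 1 := by
    have h := ht.norm
    simp only [norm_zero] at h
    exact h.eventually_lt_const one_pos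
  obtain ⟨T, hT⟩ := h1.exists_forall_of_atTop
  obtain ⟨C0, hC0⟩ := isCompact_Icc.exists_bound_of_continuousOn
    (hc.mono (Icc_subset_Ici_self : Icc (0:ℝ) (max T 0) ⊆ Ici 0))
  refine ⟨max C0 1, le_trans zero_le_one (le_max_right _ _), fun x hx => ?_⟩
  rcases le_total x (max T 0) with h | h
  · exact le_trans (hC0 x ⟨hx, h⟩) (le_max_left _ _)
  · exact le_trans (hT x (le_trans (le_max_left _ _) h)).le (le_max_right _ _)

lemma norm_cexp_neg_mul (w : ℂ) (t : ℝ) :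
    ‖Complex.exp (-(w * t))‖ = Real.exp (-(w.re * t)) := by
  rw [Complex.norm_exp]
  congr 1
  simp [Complex.mul_re]

lemma intOn_cexp_neg (w : ℂ) (hw : 0 < w.re) (x : ℝ) :
    IntegrableOn (fun t : ℝ => Complex.exp (-(w * t))) (Ioi x) volume := by
  refine (exp_neg_integrableOn_Ioi x hw).mono' ?_ ?_
  · exact (Continuous.aestronglyMeasurable (by continuity)).restrict
  · refine Eventually.of_forall fun t => ?_
    rw [norm_cexp_neg_mul]
    simp [neg_mul]

lemma integral_cexp_tail (w : ℂ) (hw : 0 < w.re) (x : ℝ) :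
    ∫ t in Ioi x, Complex.exp (-(w * t)) = Complex.exp (-(w * x)) / w := by
  have hw0 : w ≠ 0 := fun h => by simp [h] at hw
  have hd : ∀ t : ℝ, HasDerivAt (fun t : ℝ => -Complex.exp (-(w * t)) / w)
      (Complex.exp (-(w * t))) t := by
    intro t
    have h0 : HasDerivAt (fun t : ℝ => (t : ℂ)) 1 t := Complex.ofRealCLM.hasDerivAt
    have h1 : HasDerivAt (fun t : ℝ => -(w * (t:ℂ))) (-w) t := by
      simpa using (h0.const_mul w).fun_neg
    have h2 := (h1.cexp).neg.div_const w
    convert h2 using 1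
    · rfl
    · rfl
    field_simp
  have key : ∀ b : ℝ, ∫ t in x..b, Complex.exp (-(w * t))
      = -Complex.exp (-(w * b)) / w + Complex.exp (-(w * x)) / w := by
    intro b
    rw [intervalIntegral.integral_eq_sub_of_hasDerivAt (fun t _ => hd t)
      ((Continuous.intervalIntegrable (by continuity) _ _))]
    ring
  have h1 := intervalIntegral_tendsto_integral_Ioi (μ := volume) x (intOn_cexp_neg w hw x)
    (tendsto_id (α := ℝ))
  have h2 : Tendsto (fun b : ℝ => ∫ t in x..b, Complex.exp (-(w * t))) atTop
      (𝓝 (Complex.exp (-(w * x)) / w)) := by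
    simp only [key]
    have h3 : Tendsto (fun b : ℝ => -Complex.exp (-(w * b)) / w) atTop (𝓝 0) := by
      apply squeeze_zero_norm (a := fun b => Real.exp (-(w.re * b)) / ‖w‖)
      · intro b
        rw [norm_div, norm_neg, norm_cexp_neg_mul]
      · have h4 : Tendsto (fun b : ℝ => w.re * b) atTop atTop :=
          Tendsto.const_mul_atTop hw tendsto_id
        have h5 := (Real.tendsto_exp_neg_atTop_nhds_zero.comp h4).div_const ‖w‖
        simpa using h5
    simpa using h3.add (tendsto_const_nhds (x := Complex.exp (-(w * x)) / w))
  exact tendsto_nhds_unique h1 h2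

lemma integral_rexp_tail (c : ℝ) (hc : 0 < c) (x : ℝ) :
    ∫ t in Ioi x, Real.exp (-(c * t)) = Real.exp (-(c * x)) / c := by
  have hd : ∀ t : ℝ, HasDerivAt (fun t : ℝ => -Real.exp (-(c * t)) / c)
      (Real.exp (-(c * t))) t := by
    intro t
    have h1 : HasDerivAt (fun t : ℝ => -(c * t)) (-c) t := by
      simpa using ((hasDerivAt_id t).const_mul c).fun_neg
    have h2 := h1.exp.fun_neg.div_const c
    convert h2 using 1
    · rfl
    · rfl
    field_simp
  have key : ∀ b : ℝ, ∫ t in x..b, Real.exp (-(c * t))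
      = -Real.exp (-(c * b)) / c + Real.exp (-(c * x)) / c := by
    intro b
    rw [intervalIntegral.integral_eq_sub_of_hasDerivAt (fun t _ => hd t)
      ((Continuous.intervalIntegrable (by continuity) _ _))]
    ring
  have hInt : IntegrableOn (fun t : ℝ => Real.exp (-(c * t))) (Ioi x) volume := by
    simpa [neg_mul] using exp_neg_integrableOn_Ioi x hc
  have h1 := intervalIntegral_tendsto_integral_Ioi (μ := volume) x hInt (tendsto_id (α := ℝ))
  have h2 : Tendsto (fun b : ℝ => ∫ t in x..b, Real.exp (-(c * t))) atTop
      (𝓝 (Real.exp (-(c * x)) / c)) := by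
    simp only [key]
    have h4 : Tendsto (fun b : ℝ => c * b) atTop atTop :=
      Tendsto.const_mul_atTop hc tendsto_id
    have h5 := ((Real.tendsto_exp_neg_atTop_nhds_zero.comp h4).div_const c).neg
    have h6 : Tendsto (fun b : ℝ => -Real.exp (-(c * b)) / c) atTop (𝓝 0) := by
      simpa [neg_div] using h5
    simpa using h6.add (tendsto_const_nhds (x := Real.exp (-(c * x)) / c))
  exact tendsto_nhds_unique h1 h2

lemma intOn_rexp_neg (c : ℝ) (hc : 0 < c) (x : ℝ) :
    IntegrableOn (fun t : ℝ => Real.exp (-(c * t))) (Ioi x) volume := by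
  simpa [neg_mul] using exp_neg_integrableOn_Ioi x hc

section stage2
open MeasureTheory Complex Real Set Filter
open scoped Topology

noncomputable def Ek (z : ℂ) : ℝ → ℂ :=
  fun s => if s ≤ 0 then 0 else (Complex.exp (2 * z * s) - 1) / (2 * z)

noncomputable def phiK (z : ℂ) (V : ℝ → ℂ) : ℝ → ℝ :=
  fun t => ‖V (max t 0)‖ * Real.exp (2 * z.re * t) / ‖z‖

noncomputable def PhiT (z : ℂ) (V : ℝ → ℂ) : ℝ → ℝ :=
  fun x => ∫ t in Ioi x, phiK z V t

noncomputable def Wt (z : ℂ) (V : ℝ → ℂ) : ℝ → ℝ :=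
  fun x => Real.exp (2 * PhiT z V (max x 0))

variable {z : ℂ} {V : ℝ → ℂ}

lemma Ek_zero {s : ℝ} (hs : s ≤ 0) : Ek z s = 0 := if_pos hs

lemma Ek_eval {s : ℝ} (hs : 0 < s) :
    Ek z s = (Complex.exp (2 * z * s) - 1) / (2 * z) := if_neg (not_le.2 hs)

lemma Ek_cont : Continuous (Ek z) := by
  refine Continuous.if_le continuous_const ?_ continuous_id continuous_const ?_
  · continuity
  · intro s hs
    simp [hs]

lemma abs_z_pos (hz : 0 < z.re) : 0 < ‖z‖ := by
  rw [norm_pos_iff]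
  intro h; rw [h] at hz; simp at hz

lemma Ek_norm_le (hz : 0 < z.re) (s : ℝ) :
    ‖Ek z s‖ ≤ Real.exp (2 * z.re * s) / ‖z‖ := by
  have haz : 0 < ‖z‖ := abs_z_pos hz
  rcases le_or_gt s 0 with h | h
  · rw [Ek_zero h, norm_zero]
    positivity
  · rw [Ek_eval h]
    have h1 : ‖Complex.exp (2 * z * s) - 1‖ ≤ Real.exp (2 * z.re * s) + 1 := by
      refine le_trans (norm_sub_le _ _) ?_
      simp only [norm_one]
      gcongr
      rw [Complex.norm_exp]
      apply le_of_eq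
      congr 1
      simp [Complex.mul_re]
    have h2 : (1 : ℝ) ≤ Real.exp (2 * z.re * s) := by
      rw [Real.one_le_exp_iff]
      positivity
    rw [norm_div]
    have h3 : ‖(2 : ℂ) * z‖ = 2 * ‖z‖ := by
      rw [norm_mul]; norm_num
    rw [h3]
    rw [div_le_div_iff₀ (by positivity) (by positivity)]
    nlinarith [h1, h2]

lemma Vm_cont (hVcont : ContinuousOn V (Ici 0)) : Continuous (fun t : ℝ => V (max t 0)) :=
  hVcont.comp_continuous (continuous_id.max continuous_const) fun x => mem_Ici.mpr (le_max_right x 0)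

lemma phiK_nonneg (t : ℝ) : 0 ≤ phiK z V t := by unfold phiK; positivity

lemma phiK_cont (hVcont : ContinuousOn V (Ici 0)) : Continuous (phiK z V) := by
  unfold phiK
  exact ((continuous_norm.comp (Vm_cont hVcont)).mul
    (Real.continuous_exp.comp (continuous_const.mul continuous_id))).div_const _

lemma phiK_int (hVcont : ContinuousOn V (Ici 0))
    (hVdec : IntegrableOn (fun x => ‖V x‖ * Real.exp (2 * z.re * x))
      (Ici (0:ℝ)) volume) :
    IntegrableOn (phiK z V) (Ioi 0) volume := by
  have h1 : IntegrableOn (fun x => ‖V x‖ * Real.exp (2 * z.re * x)) (Ioi 0) volume :=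
    hVdec.mono_set Ioi_subset_Ici_self
  have h2 : IntegrableOn (fun x => ‖V x‖ * Real.exp (2 * z.re * x) / ‖z‖)
      (Ioi 0) volume := h1.div_const _
  refine h2.congr_fun ?_ measurableSet_Ioi
  intro t ht
  simp only [phiK, max_eq_left (le_of_lt (show (0:ℝ) < t from ht))]

lemma PhiT_eq (hVcont : ContinuousOn V (Ici 0))
    (hVdec : IntegrableOn (fun x => ‖V x‖ * Real.exp (2 * z.re * x))
      (Ici (0:ℝ)) volume) {x : ℝ} (hx : 0 ≤ x) :
    PhiT z V x = PhiT z V 0 - ∫ t in (0:ℝ)..x, phiK z V t :=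
  split_tail (phiK_int hVcont hVdec) hx

lemma primitive_hasDerivAt (hVcont : ContinuousOn V (Ici 0)) (x : ℝ) :
    HasDerivAt (fun y => ∫ t in (0:ℝ)..y, phiK z V t) (phiK z V x) x := by
  refine intervalIntegral.integral_hasDerivAt_right
    ((phiK_cont hVcont).intervalIntegrable _ _) ?_ (phiK_cont hVcont).continuousAt
  exact (phiK_cont hVcont).stronglyMeasurable.stronglyMeasurableAtFilter

lemma PhiT_contOn (hVcont : ContinuousOn V (Ici 0))
    (hVdec : IntegrableOn (fun x => ‖V x‖ * Real.exp (2 * z.re * x))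
      (Ici (0:ℝ)) volume) : ContinuousOn (PhiT z V) (Ici 0) := by
  have hc : Continuous (fun y : ℝ => PhiT z V 0 - ∫ t in (0:ℝ)..y, phiK z V t) := by
    refine continuous_const.sub ?_
    have : Differentiable ℝ (fun y : ℝ => ∫ t in (0:ℝ)..y, phiK z V t) :=
      fun x => (primitive_hasDerivAt hVcont x).differentiableAt
    exact this.continuous
  refine (hc.continuousOn).congr ?_
  intro x hx
  exact PhiT_eq hVcont hVdec hx

lemma PhiT_hasDerivAt (hVcont : ContinuousOn V (Ici 0))
    (hVdec : IntegrableOn (fun x => ‖V x‖ * Real.exp (2 * z.re * x))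
      (Ici (0:ℝ)) volume) {x : ℝ} (hx : 0 < x) :
    HasDerivAt (PhiT z V) (-phiK z V x) x := by
  have h1 : HasDerivAt (fun y : ℝ => PhiT z V 0 - ∫ t in (0:ℝ)..y, phiK z V t)
      (-phiK z V x) x := by
    simpa using (hasDerivAt_const x (PhiT z V 0)).fun_sub (primitive_hasDerivAt hVcont x)
  refine h1.congr_of_eventuallyEq ?_
  filter_upwards [Ici_mem_nhds hx] with y hy
  exact PhiT_eq hVcont hVdec hy

lemma PhiT_nonneg {x : ℝ} (_hx : 0 ≤ x) : 0 ≤ PhiT z V x :=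
  setIntegral_nonneg measurableSet_Ioi fun t _ => phiK_nonneg t

lemma PhiT_mono (hVcont : ContinuousOn V (Ici 0))
    (hVdec : IntegrableOn (fun x => ‖V x‖ * Real.exp (2 * z.re * x))
      (Ici (0:ℝ)) volume) {x y : ℝ} (hx : 0 ≤ x) (hxy : x ≤ y) :
    PhiT z V y ≤ PhiT z V x := by
  refine setIntegral_mono_set ((phiK_int hVcont hVdec).mono_set (Ioi_subset_Ioi hx)) ?_ ?_
  · exact Eventually.of_forall fun t => phiK_nonneg t
  · exact HasSubset.Subset.eventuallyLE (Ioi_subset_Ioi hxy)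

lemma PhiT_tendsto (hVcont : ContinuousOn V (Ici 0))
    (hVdec : IntegrableOn (fun x => ‖V x‖ * Real.exp (2 * z.re * x))
      (Ici (0:ℝ)) volume) : Tendsto (PhiT z V) atTop (𝓝 0) :=
  tendsto_tail (phiK_int hVcont hVdec)

lemma Wt_eq {x : ℝ} (hx : 0 ≤ x) : Wt z V x = Real.exp (2 * PhiT z V x) := by
  rw [Wt, max_eq_left hx]

lemma Wt_one_le (x : ℝ) : 1 ≤ Wt z V x := by
  rw [Wt, Real.one_le_exp_iff]
  have := PhiT_nonneg (z := z) (V := V) (le_max_right x 0)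
  linarith

lemma Wt_pos (x : ℝ) : 0 < Wt z V x := lt_of_lt_of_le one_pos (Wt_one_le x)

lemma Wt_le (hVcont : ContinuousOn V (Ici 0))
    (hVdec : IntegrableOn (fun x => ‖V x‖ * Real.exp (2 * z.re * x))
      (Ici (0:ℝ)) volume) (x : ℝ) : Wt z V x ≤ Real.exp (2 * PhiT z V 0) := by
  rw [Wt, Real.exp_le_exp]
  have := PhiT_mono (z := z) (V := V) hVcont hVdec le_rfl (le_max_right x 0)
  linarith

lemma Wt_cont (hVcont : ContinuousOn V (Ici 0))
    (hVdec : IntegrableOn (fun x => ‖V x‖ * Real.exp (2 * z.re * x))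
      (Ici (0:ℝ)) volume) : Continuous (Wt z V) := by
  refine Real.continuous_exp.comp (continuous_const.mul ?_)
  exact (PhiT_contOn hVcont hVdec).comp_continuous
    (continuous_id.max continuous_const) fun x => mem_Ici.mpr (le_max_right x 0)

lemma phiK_mul_Wt_int (hVcont : ContinuousOn V (Ici 0))
    (hVdec : IntegrableOn (fun x => ‖V x‖ * Real.exp (2 * z.re * x))
      (Ici (0:ℝ)) volume) {a : ℝ} (ha : 0 ≤ a) :
    IntegrableOn (fun t => phiK z V t * Wt z V t) (Ioi a) volume := by
  refine (((phiK_int hVcont hVdec).mono_set (Ioi_subset_Ioi ha)).mul_const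
    (Real.exp (2 * PhiT z V 0))).mono' ?_ ?_
  · exact (((phiK_cont hVcont).mul (Wt_cont hVcont hVdec)).aestronglyMeasurable).restrict
  · refine Eventually.of_forall fun t => ?_
    rw [Real.norm_eq_abs, _root_.abs_of_nonneg (mul_nonneg (phiK_nonneg t) (Wt_pos t).le)]
    exact mul_le_mul_of_nonneg_left (Wt_le hVcont hVdec t) (phiK_nonneg t)

lemma Wt_key (hVcont : ContinuousOn V (Ici 0))
    (hVdec : IntegrableOn (fun x => ‖V x‖ * Real.exp (2 * z.re * x))
      (Ici (0:ℝ)) volume) (x : ℝ) :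
    ∫ t in Ioi (max x 0), phiK z V t * Wt z V t ≤ (Wt z V x - 1) / 2 := by
  set a := max x 0 with ha
  have ha0 : 0 ≤ a := le_max_right x 0
  have hWa : Wt z V x = Real.exp (2 * PhiT z V a) := rfl
  have key : ∀ b, a ≤ b → ∫ t in a..b, phiK z V t * Wt z V t ≤ (Wt z V x - 1) / 2 := by
    intro b hb
    have heq : ∫ t in a..b, phiK z V t * Wt z V t
        = ∫ t in a..b, phiK z V t * Real.exp (2 * PhiT z V t) := by
      refine intervalIntegral.integral_congr ?_
      intro t ht
      rw [uIcc_of_le hb] at ht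
      dsimp only
      rw [Wt_eq (le_trans ha0 ht.1)]
    have hsub : Icc a b ⊆ Ici (0:ℝ) := fun t ht => le_trans ha0 ht.1
    have hG : ∀ t ∈ Ioo a b, HasDerivWithinAt (fun y => -Real.exp (2 * PhiT z V y) / 2)
        (phiK z V t * Real.exp (2 * PhiT z V t)) (Ioi t) t := by
      intro t ht
      have ht0 : 0 < t := lt_of_le_of_lt ha0 ht.1
      have h1 := (((PhiT_hasDerivAt hVcont hVdec ht0).const_mul
        (2:ℝ)).exp.fun_neg.div_const (2:ℝ)).hasDerivWithinAt (s := Ioi t)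
      convert h1 using 1
      · rfl
      · rfl
      ring
    have hPc : ContinuousOn (fun y => Real.exp (2 * PhiT z V y)) (Icc a b) :=
      Real.continuous_exp.comp_continuousOn
        (continuousOn_const.mul ((PhiT_contOn hVcont hVdec).mono hsub))
    have hcont : ContinuousOn (fun y => -Real.exp (2 * PhiT z V y) / 2) (Icc a b) :=
      (hPc.neg).div_const 2
    have hint : IntervalIntegrable (fun t => phiK z V t * Real.exp (2 * PhiT z V t))
        volume a b := by
      refine ContinuousOn.intervalIntegrable ?_
      rw [uIcc_of_le hb]
      exact ((phiK_cont hVcont).continuousOn).mul hPc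
    have hftc := intervalIntegral.integral_eq_sub_of_hasDeriv_right_of_le hb hcont hG hint
    rw [heq, hftc, hWa]
    have h1 : (1:ℝ) ≤ Real.exp (2 * PhiT z V b) := by
      rw [Real.one_le_exp_iff]
      have := PhiT_nonneg (z := z) (V := V) (le_trans ha0 hb)
      linarith
    linarith
  have hlim := intervalIntegral_tendsto_integral_Ioi a
    (phiK_mul_Wt_int hVcont hVdec ha0) (tendsto_id (α := ℝ))
  refine le_of_tendsto hlim ?_
  filter_upwards [eventually_ge_atTop a] with b hb
  exact key b hb

end stage2

section stage3
open MeasureTheory Complex Real Set Filter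
open scoped Topology

variable {z : ℂ} {V : ℝ → ℂ}

lemma exists_m (hz : 0 < z.re) (hVcont : ContinuousOn V (Ici 0))
    (hVdec : IntegrableOn (fun x => ‖V x‖ * Real.exp (2 * z.re * x))
      (Ici (0:ℝ)) volume) :
    ∃ m : ℝ → ℂ, Continuous m ∧ (∃ Cm : ℝ, 0 ≤ Cm ∧ ∀ x, ‖m x‖ ≤ Cm) ∧
      ∀ x : ℝ, m x = 1 + ∫ t in Ioi (0:ℝ),
        Ek z (t - max x 0) * (V (max t 0) * m t) := by
  classical
  set az := ‖z‖ with haz_def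
  have haz : 0 < az := abs_z_pos hz
  set Wm := Real.exp (2 * PhiT z V 0) with hWm
  have hWm1 : (1:ℝ) ≤ Wm := by
    rw [hWm, Real.one_le_exp_iff]
    have := PhiT_nonneg (z := z) (V := V) le_rfl
    linarith
  have hVmc := Vm_cont hVcont
  have hφi := phiK_int hVcont hVdec
  have hWc := Wt_cont hVcont hVdec
  have hWrc : Continuous (fun x : ℝ => ((Wt z V x : ℝ) : ℂ)) :=
    Complex.continuous_ofReal.comp hWc
  have hWne : ∀ x : ℝ, ((Wt z V x : ℝ) : ℂ) ≠ 0 := fun x => by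
    exact_mod_cast (Wt_pos (z := z) (V := V) x).ne'
  -- pointwise bound
  have hbd : ∀ (x t : ℝ) (c : ℂ), 0 < t →
      ‖Ek z (t - max x 0) * (V (max t 0) * (((Wt z V t : ℝ) : ℂ) * c))‖
        ≤ phiK z V t * (Wm * ‖c‖) := by
    intro x t c ht
    have e1 : ‖Ek z (t - max x 0)‖ ≤ Real.exp (2 * z.re * t) / az := by
      refine le_trans (Ek_norm_le hz _) ?_
      gcongr
      nlinarith [le_max_right x 0, hz.le]
    have e2 : ‖((Wt z V t : ℝ) : ℂ)‖ = Wt z V t := by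
      rw [Complex.norm_real, Real.norm_eq_abs,
        _root_.abs_of_nonneg (Wt_pos (z := z) (V := V) t).le]
    calc ‖Ek z (t - max x 0) * (V (max t 0) * (((Wt z V t : ℝ) : ℂ) * c))‖
        = ‖Ek z (t - max x 0)‖ * (‖V (max t 0)‖ * (Wt z V t * ‖c‖)) := by
          rw [norm_mul, norm_mul, norm_mul, e2]
      _ ≤ (Real.exp (2 * z.re * t) / az) * (‖V (max t 0)‖ * (Wm * ‖c‖)) := by
          refine mul_le_mul e1 ?_ (mul_nonneg (norm_nonneg _) (mul_nonneg
            (Wt_pos (z := z) (V := V) t).le (norm_nonneg _)))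
            (div_nonneg (Real.exp_nonneg _) haz.le)
          refine mul_le_mul_of_nonneg_left ?_ (norm_nonneg _)
          exact mul_le_mul_of_nonneg_right (Wt_le hVcont hVdec t) (norm_nonneg c)
      _ = phiK z V t * (Wm * ‖c‖) := by
          simp only [phiK]; ring
  -- integrability of the integrand
  have hInt : ∀ (u : BoundedContinuousFunction ℝ ℂ) (x : ℝ),
      IntegrableOn (fun t => Ek z (t - max x 0) * (V (max t 0) * (((Wt z V t : ℝ) : ℂ) * u t)))
        (Ioi 0) volume := by
    intro u x
    refine ((hφi.mul_const (Wm * ‖u‖)).mono' ?_ ?_)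
    · refine Continuous.aestronglyMeasurable ?_ |>.restrict
      exact (Ek_cont.comp (continuous_id.sub continuous_const)).mul
        (hVmc.mul (hWrc.mul u.continuous))
    · filter_upwards [ae_restrict_mem measurableSet_Ioi] with t ht
      refine le_trans (hbd x t (u t) ht) ?_
      have := u.norm_coe_le_norm t
      gcongr
      exact phiK_nonneg t
  -- the operator
  have main : ∀ u : BoundedContinuousFunction ℝ ℂ, ∃ v : BoundedContinuousFunction ℝ ℂ,
      ∀ x : ℝ, v x = ((Wt z V x : ℝ) : ℂ)⁻¹ *
        (1 + ∫ t in Ioi (0:ℝ), Ek z (t - max x 0) * (V (max t 0) * (((Wt z V t : ℝ) : ℂ) * u t))) := by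
    intro u
    set g : ℝ → ℂ := fun x => 1 + ∫ t in Ioi (0:ℝ),
      Ek z (t - max x 0) * (V (max t 0) * (((Wt z V t : ℝ) : ℂ) * u t)) with hg
    have hgc : Continuous g := by
      rw [hg]
      refine continuous_const.add ?_
      refine continuous_of_dominated (bound := fun t => phiK z V t * (Wm * ‖u‖)) ?_ ?_ ?_ ?_
      · intro x
        refine Continuous.aestronglyMeasurable ?_ |>.restrict
        exact (Ek_cont.comp (continuous_id.sub continuous_const)).mul
          (hVmc.mul (hWrc.mul u.continuous))
      · intro x
        filter_upwards [ae_restrict_mem measurableSet_Ioi] with t ht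
        refine le_trans (hbd x t (u t) ht) ?_
        have := u.norm_coe_le_norm t
        gcongr
        exact phiK_nonneg t
      · exact hφi.mul_const _
      · refine Eventually.of_forall fun t => ?_
        exact (Ek_cont.comp (continuous_const.sub
          ((continuous_id.max continuous_const)))).mul continuous_const
    have hgbd : ∀ x, ‖g x‖ ≤ 1 + (∫ t in Ioi (0:ℝ), phiK z V t) * (Wm * ‖u‖) := by
      intro x
      rw [hg]
      refine le_trans (norm_add_le _ _) ?_
      simp only [norm_one]
      gcongr
      refine le_trans (norm_integral_le_of_norm_le (hφi.mul_const (Wm * ‖u‖)) ?_)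
        (le_of_eq (by rw [integral_mul_const]))
      filter_upwards [ae_restrict_mem measurableSet_Ioi] with t ht
      refine le_trans (hbd x t (u t) ht) ?_
      have := u.norm_coe_le_norm t
      gcongr
      exact phiK_nonneg t
    refine ⟨BoundedContinuousFunction.ofNormedAddCommGroup
      (fun x => ((Wt z V x : ℝ) : ℂ)⁻¹ * g x)
      ((hWrc.inv₀ hWne).mul hgc)
      (1 + (∫ t in Ioi (0:ℝ), phiK z V t) * (Wm * ‖u‖)) ?_, fun x => rfl⟩
    intro x
    rw [norm_mul]
    have h1 : ‖((Wt z V x : ℝ) : ℂ)⁻¹‖ ≤ 1 := by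
      rw [norm_inv, Complex.norm_real, Real.norm_eq_abs,
        _root_.abs_of_nonneg (Wt_pos (z := z) (V := V) x).le]
      rw [inv_le_one_iff₀]
      right
      exact Wt_one_le x
    have h2 := hgbd x
    have h3 : (0:ℝ) ≤ 1 + (∫ t in Ioi (0:ℝ), phiK z V t) * (Wm * ‖u‖) := by
      have : (0:ℝ) ≤ ∫ t in Ioi (0:ℝ), phiK z V t :=
        setIntegral_nonneg measurableSet_Ioi fun t _ => phiK_nonneg t
      positivity
    nlinarith [norm_nonneg (g x)]
  choose S hSdef using main
  -- contraction
  have hcontr : ContractingWith (1/2 : NNReal) S := by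
    constructor
    · exact one_half_lt_one
    · refine LipschitzWith.of_dist_le_mul fun u v => ?_
      have hhalf : ((1/2 : NNReal) : ℝ) = 1/2 := by norm_num
      rw [hhalf]
      rw [BoundedContinuousFunction.dist_le (by positivity)]
      intro x
      rw [dist_eq_norm, hSdef u x, hSdef v x]
      set d := dist u v with hd
      have hd0 : 0 ≤ d := dist_nonneg
      have hIuv : (∫ t in Ioi (0:ℝ), Ek z (t - max x 0) * (V (max t 0) * (((Wt z V t : ℝ) : ℂ) * u t)))
          - (∫ t in Ioi (0:ℝ), Ek z (t - max x 0) * (V (max t 0) * (((Wt z V t : ℝ) : ℂ) * v t)))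
          = ∫ t in Ioi (0:ℝ), Ek z (t - max x 0) * (V (max t 0) * (((Wt z V t : ℝ) : ℂ) * (u t - v t))) := by
        rw [← integral_sub (hInt u x) (hInt v x)]
        refine setIntegral_congr_fun measurableSet_Ioi fun t _ => ?_
        ring
      have hsplit : ((Wt z V x : ℝ) : ℂ)⁻¹ *
            (1 + ∫ t in Ioi (0:ℝ), Ek z (t - max x 0) * (V (max t 0) * (((Wt z V t : ℝ) : ℂ) * u t)))
          - ((Wt z V x : ℝ) : ℂ)⁻¹ *
            (1 + ∫ t in Ioi (0:ℝ), Ek z (t - max x 0) * (V (max t 0) * (((Wt z V t : ℝ) : ℂ) * v t)))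
          = ((Wt z V x : ℝ) : ℂ)⁻¹ *
            (∫ t in Ioi (0:ℝ), Ek z (t - max x 0) * (V (max t 0) * (((Wt z V t : ℝ) : ℂ) * (u t - v t)))) := by
        rw [← hIuv]
        ring
      rw [hsplit]
      -- bound the integral
      have hindloc : Integrable ((Ioi (max x 0)).indicator (fun t => phiK z V t * Wt z V t))
          (volume.restrict (Ioi (0:ℝ))) :=
        ((phiK_mul_Wt_int hVcont hVdec (le_max_right x 0)).integrable_indicator
          measurableSet_Ioi).restrict
      have hnormint : ‖∫ t in Ioi (0:ℝ), Ek z (t - max x 0) * (V (max t 0) * (((Wt z V t : ℝ) : ℂ) * (u t - v t)))‖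
          ≤ ∫ t in Ioi (0:ℝ), (Ioi (max x 0)).indicator (fun t => phiK z V t * Wt z V t) t * d := by
        refine norm_integral_le_of_norm_le (hindloc.mul_const d) ?_
        filter_upwards [ae_restrict_mem measurableSet_Ioi] with t ht
        rcases le_or_gt t (max x 0) with hle | hgt
        · rw [Ek_zero (by linarith : t - max x 0 ≤ 0)]
          rw [indicator_of_notMem (by simp only [mem_Ioi, not_lt]; exact hle)]
          simp
        · rw [indicator_of_mem (by simpa using hgt)]
          have e2 : ‖((Wt z V t : ℝ) : ℂ)‖ = Wt z V t := by
            rw [Complex.norm_real, Real.norm_eq_abs,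
              _root_.abs_of_nonneg (Wt_pos (z := z) (V := V) t).le]
          have e1 : ‖Ek z (t - max x 0)‖ ≤ Real.exp (2 * z.re * t) / az := by
            refine le_trans (Ek_norm_le hz _) ?_
            gcongr
            nlinarith [le_max_right x 0, hz.le]
          have e3 : ‖u t - v t‖ ≤ d := by
            rw [← dist_eq_norm]
            exact BoundedContinuousFunction.dist_coe_le_dist t
          calc ‖Ek z (t - max x 0) * (V (max t 0) * (((Wt z V t : ℝ) : ℂ) * (u t - v t)))‖
              = ‖Ek z (t - max x 0)‖ * (‖V (max t 0)‖ * (Wt z V t * ‖u t - v t‖)) := by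
                rw [norm_mul, norm_mul, norm_mul, e2]
            _ ≤ (Real.exp (2 * z.re * t) / az) * (‖V (max t 0)‖ * (Wt z V t * d)) := by
                refine mul_le_mul e1 ?_ (mul_nonneg (norm_nonneg _) (mul_nonneg
                  (Wt_pos (z := z) (V := V) t).le (norm_nonneg _)))
                  (div_nonneg (Real.exp_nonneg _) haz.le)
                refine mul_le_mul_of_nonneg_left ?_ (norm_nonneg _)
                exact mul_le_mul_of_nonneg_left e3 (Wt_pos (z := z) (V := V) t).le
            _ = phiK z V t * Wt z V t * d := by
                simp only [phiK]; ring
      have hindeval : ∫ t in Ioi (0:ℝ), (Ioi (max x 0)).indicator (fun t => phiK z V t * Wt z V t) t * d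
          = (∫ t in Ioi (max x 0), phiK z V t * Wt z V t) * d := by
        rw [integral_mul_const]
        congr 1
        rw [setIntegral_indicator measurableSet_Ioi]
        congr 1
        rw [Ioi_inter_Ioi]
        congr 1
        simp
      have hkey := Wt_key hVcont hVdec (z := z) (V := V) x
      have hWx1 := Wt_one_le (z := z) (V := V) x
      have hWxpos := Wt_pos (z := z) (V := V) x
      have hintnn : (0:ℝ) ≤ ∫ t in Ioi (max x 0), phiK z V t * Wt z V t :=
        setIntegral_nonneg measurableSet_Ioi fun t _ =>
          mul_nonneg (phiK_nonneg t) (Wt_pos (z := z) (V := V) t).le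
      rw [norm_mul]
      have hWinv : ‖((Wt z V x : ℝ) : ℂ)⁻¹‖ = (Wt z V x)⁻¹ := by
        rw [norm_inv, Complex.norm_real, Real.norm_eq_abs,
          _root_.abs_of_nonneg hWxpos.le]
      rw [hWinv]
      have hle2 : ‖∫ t in Ioi (0:ℝ), Ek z (t - max x 0) * (V (max t 0) * (((Wt z V t : ℝ) : ℂ) * (u t - v t)))‖
          ≤ (Wt z V x - 1) / 2 * d := by
        refine le_trans hnormint ?_
        rw [hindeval]
        exact mul_le_mul_of_nonneg_right hkey hd0
      calc (Wt z V x)⁻¹ * ‖∫ t in Ioi (0:ℝ), Ek z (t - max x 0) * (V (max t 0) * (((Wt z V t : ℝ) : ℂ) * (u t - v t)))‖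
          ≤ (Wt z V x)⁻¹ * ((Wt z V x - 1) / 2 * d) := by
            exact mul_le_mul_of_nonneg_left hle2 (inv_nonneg.mpr hWxpos.le)
        _ ≤ 1 / 2 * d := by
            have hWinveq : (Wt z V x)⁻¹ * Wt z V x = 1 := inv_mul_cancel₀ hWxpos.ne'
            have hid : 0 ≤ (Wt z V x)⁻¹ * d := mul_nonneg (inv_nonneg.mpr hWxpos.le) hd0
            nlinarith [hWinveq, hid, hd0]
  -- fixed point
  have : Nonempty (BoundedContinuousFunction ℝ ℂ) := ⟨0⟩
  obtain ⟨u, hufix⟩ : ∃ u : BoundedContinuousFunction ℝ ℂ, S u = u :=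
    ⟨ContractingWith.fixedPoint S hcontr, hcontr.fixedPoint_isFixedPt⟩
  refine ⟨fun x => ((Wt z V x : ℝ) : ℂ) * u x, ?_, ?_, ?_⟩
  · exact hWrc.mul u.continuous
  · refine ⟨Wm * ‖u‖, by positivity, fun x => ?_⟩
    rw [norm_mul]
    have e2 : ‖((Wt z V x : ℝ) : ℂ)‖ = Wt z V x := by
      rw [Complex.norm_real, Real.norm_eq_abs,
        _root_.abs_of_nonneg (Wt_pos (z := z) (V := V) x).le]
    rw [e2]
    exact mul_le_mul (Wt_le hVcont hVdec x) (u.norm_coe_le_norm x) (norm_nonneg _)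
      (by positivity)
  · intro x
    have hux : u x = S u x := by rw [hufix]
    dsimp only
    conv_lhs => rw [hux, hSdef u x]
    rw [← mul_assoc, mul_inv_cancel₀ (hWne x), one_mul]

section stage4
open MeasureTheory Complex Real Set Filter
open scoped Topology

variable {z : ℂ} {V : ℝ → ℂ}

lemma norm_cexp_mul (w : ℂ) (x : ℝ) : ‖Complex.exp (w * x)‖ = Real.exp (w.re * x) := by
  rw [Complex.norm_exp]
  congr 1
  simp [Complex.mul_re]

lemma hasDerivAt_cexp_mul (w : ℂ) (x : ℝ) :
    HasDerivAt (fun x : ℝ => Complex.exp (w * x)) (w * Complex.exp (w * x)) x := by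
  have h0 : HasDerivAt (fun t : ℝ => (t : ℂ)) 1 x := Complex.ofRealCLM.hasDerivAt
  have h1 : HasDerivAt (fun t : ℝ => w * (t : ℂ)) w x := by simpa using h0.const_mul w
  simpa [mul_comm] using h1.cexp

lemma exists_solution (hz : 0 < z.re) (hVcont : ContinuousOn V (Ici 0))
    (hVdec : IntegrableOn (fun x => ‖V x‖ * Real.exp (2 * z.re * x))
      (Ici (0:ℝ)) volume) :
    ∃ f : ℝ → ℂ, IsResonanceSolution V z f := by
  classical
  obtain ⟨m, hmc, ⟨Cm, hCm0, hCm⟩, hmeq⟩ := exists_m hz hVcont hVdec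
  set az := ‖z‖ with haz_def
  have haz : 0 < az := abs_z_pos hz
  have hz0 : z ≠ 0 := fun h => by rw [h] at hz; simp at hz
  have h2z0 : (2 : ℂ) * z ≠ 0 := by simp [hz0]
  have hVmc := Vm_cont hVcont
  have hφi := phiK_int hVcont hVdec
  have hφc := phiK_cont (z := z) hVcont
  -- the two auxiliary integrands
  set ψP : ℝ → ℂ := fun t => Complex.exp (2 * z * t) * (V (max t 0) * m t) with hψP
  set ψQ : ℝ → ℂ := fun t => V (max t 0) * m t with hψQ
  have hψPc : Continuous ψP :=
    (Complex.continuous_exp.comp (continuous_const.mul Complex.continuous_ofReal)).mul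
      (hVmc.mul hmc)
  have hψQc : Continuous ψQ := hVmc.mul hmc
  have hψPbd : ∀ t : ℝ, 0 < t → ‖ψP t‖ ≤ phiK z V t * (az * Cm) := by
    intro t ht
    rw [hψP]
    dsimp only
    rw [norm_mul, norm_mul]
    have e1 : ‖Complex.exp (2 * z * (t:ℂ))‖ = Real.exp (2 * z.re * t) := by
      have := norm_cexp_mul (2 * z) t
      simpa using this
    rw [e1]
    calc Real.exp (2 * z.re * t) * (‖V (max t 0)‖ * ‖m t‖)
        ≤ Real.exp (2 * z.re * t) * (‖V (max t 0)‖ * Cm) := by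
          refine mul_le_mul_of_nonneg_left ?_ (Real.exp_nonneg _)
          exact mul_le_mul_of_nonneg_left (hCm t) (norm_nonneg _)
      _ = phiK z V t * (az * Cm) := by
          simp only [phiK]
          field_simp
          ring
  have hψQbd : ∀ t : ℝ, 0 < t → ‖ψQ t‖ ≤ phiK z V t * (az * Cm) := by
    intro t ht
    rw [hψQ]
    dsimp only
    rw [norm_mul]
    have e1 : (1:ℝ) ≤ Real.exp (2 * z.re * t) := by
      rw [Real.one_le_exp_iff]; positivity
    calc ‖V (max t 0)‖ * ‖m t‖ ≤ ‖V (max t 0)‖ * Cm :=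
          mul_le_mul_of_nonneg_left (hCm t) (norm_nonneg _)
      _ ≤ Real.exp (2 * z.re * t) * (‖V (max t 0)‖ * Cm) := by
          nlinarith [mul_nonneg (norm_nonneg (V (max t 0))) hCm0, e1]
      _ = phiK z V t * (az * Cm) := by
          simp only [phiK]
          field_simp
          ring
  have hψPi : IntegrableOn ψP (Ioi 0) volume := by
    refine (hφi.mul_const (az * Cm)).mono' (hψPc.aestronglyMeasurable.restrict) ?_
    filter_upwards [ae_restrict_mem measurableSet_Ioi] with t ht
    exact hψPbd t ht
  have hψQi : IntegrableOn ψQ (Ioi 0) volume := by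
    refine (hφi.mul_const (az * Cm)).mono' (hψQc.aestronglyMeasurable.restrict) ?_
    filter_upwards [ae_restrict_mem measurableSet_Ioi] with t ht
    exact hψQbd t ht
  -- primitives
  set P : ℝ → ℂ := fun x => (∫ t in Ioi (0:ℝ), ψP t) - ∫ t in (0:ℝ)..x, ψP t with hP
  set Q : ℝ → ℂ := fun x => (∫ t in Ioi (0:ℝ), ψQ t) - ∫ t in (0:ℝ)..x, ψQ t with hQ
  have hprim : ∀ (ψ : ℝ → ℂ), Continuous ψ →
      ∀ x : ℝ, HasDerivAt (fun y => ∫ t in (0:ℝ)..y, ψ t) (ψ x) x := by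
    intro ψ hψ x
    exact intervalIntegral.integral_hasDerivAt_right (hψ.intervalIntegrable _ _)
      (hψ.stronglyMeasurable.stronglyMeasurableAtFilter) hψ.continuousAt
  have hPder : ∀ x : ℝ, HasDerivAt P (-ψP x) x := by
    intro x
    simpa using (hasDerivAt_const x (∫ t in Ioi (0:ℝ), ψP t)).fun_sub (hprim ψP hψPc x)
  have hQder : ∀ x : ℝ, HasDerivAt Q (-ψQ x) x := by
    intro x
    simpa using (hasDerivAt_const x (∫ t in Ioi (0:ℝ), ψQ t)).fun_sub (hprim ψQ hψQc x)
  have hPIoi : ∀ x : ℝ, 0 ≤ x → P x = ∫ t in Ioi x, ψP t := by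
    intro x hx
    rw [hP]
    exact (split_tail hψPi hx).symm
  have hQIoi : ∀ x : ℝ, 0 ≤ x → Q x = ∫ t in Ioi x, ψQ t := by
    intro x hx
    rw [hQ]
    exact (split_tail hψQi hx).symm
  have hPc : Continuous P := by
    refine continuous_const.sub ?_
    exact Differentiable.continuous (fun x => (hprim ψP hψPc x).differentiableAt)
  have hQc : Continuous Q := by
    refine continuous_const.sub ?_
    exact Differentiable.continuous (fun x => (hprim ψQ hψQc x).differentiableAt)
  -- the solution
  set f : ℝ → ℂ := fun x => Complex.exp (z * x) +
    (Complex.exp ((-z) * x) * P x - Complex.exp (z * x) * Q x) / (2 * z) with hf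
  -- key identity : f x = e^{zx} m x for x ≥ 0
  have hfm : ∀ x : ℝ, 0 ≤ x → f x = Complex.exp (z * x) * m x := by
    intro x hx
    have hmx := hmeq x
    rw [max_eq_left hx] at hmx
    have hsplit : (∫ t in Ioi (0:ℝ), Ek z (t - x) * (V (max t 0) * m t))
        = Complex.exp (-(2 * z * x)) / (2 * z) * P x - (1 / (2 * z)) * Q x := by
      have step1 : (∫ t in Ioi (0:ℝ), Ek z (t - x) * (V (max t 0) * m t))
          = ∫ t in Ioi (0:ℝ), (Ioi x).indicator
              (fun t => (Complex.exp (2 * z * (t - x)) - 1) / (2 * z) * (V (max t 0) * m t)) t := by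
        refine setIntegral_congr_fun measurableSet_Ioi fun t _ => ?_
        rcases le_or_gt t x with hle | hgt
        · rw [Ek_zero (by linarith : t - x ≤ 0), indicator_of_notMem (by
            simp only [mem_Ioi, not_lt]; exact hle)]
          simp
        · rw [indicator_of_mem (by simpa using hgt)]
          rw [Ek_eval (by linarith : (0:ℝ) < t - x)]
          push_cast
          ring_nf
      rw [step1, setIntegral_indicator measurableSet_Ioi]
      have hset : Ioi (0:ℝ) ∩ Ioi x = Ioi x := by
        rw [Ioi_inter_Ioi]
        congr 1
        simp [hx]
      rw [hset]
      have step2 : ∀ t ∈ Ioi x,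
          (Complex.exp (2 * z * ((t:ℝ) - x)) - 1) / (2 * z) * (V (max t 0) * m t)
          = Complex.exp (-(2 * z * x)) / (2 * z) * ψP t - (1 / (2 * z)) * ψQ t := by
        intro t _
        have he : Complex.exp (2 * z * ((t:ℝ) - x)) =
            Complex.exp (-(2 * z * x)) * Complex.exp (2 * z * t) := by
          rw [← Complex.exp_add]
          congr 1
          push_cast
          ring
        rw [he, hψP, hψQ]
        dsimp only
        field_simp
      rw [setIntegral_congr_fun measurableSet_Ioi step2]
      have hPix : IntegrableOn ψP (Ioi x) volume := hψPi.mono_set (Ioi_subset_Ioi hx)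
      have hQix : IntegrableOn ψQ (Ioi x) volume := hψQi.mono_set (Ioi_subset_Ioi hx)
      rw [integral_sub (hPix.const_mul _) (hQix.const_mul _),
        integral_const_mul, integral_const_mul, ← hPIoi x hx, ← hQIoi x hx]
    rw [hf]
    dsimp only
    rw [hmx, hsplit]
    have hee : Complex.exp (z * (x:ℂ)) * Complex.exp (-(2 * z * (x:ℂ))) = Complex.exp ((-z) * (x:ℂ)) := by
      rw [← Complex.exp_add]
      congr 1
      ring
    linear_combination (-(P x) / (2 * z)) * hee
  -- first derivative
  set f1 : ℝ → ℂ := fun x => z * Complex.exp (z * x) -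
    (Complex.exp ((-z) * x) * P x + Complex.exp (z * x) * Q x) / 2 with hf1
  have hkeyPQ : ∀ x : ℝ, Complex.exp ((-z) * (x:ℂ)) * ψP x = Complex.exp (z * (x:ℂ)) * ψQ x := by
    intro x
    rw [hψP, hψQ]
    dsimp only
    rw [← mul_assoc, ← Complex.exp_add]
    congr 2
    ring
  have hfder : ∀ x : ℝ, HasDerivAt f (f1 x) x := by
    intro x
    have h2 := ((hasDerivAt_cexp_mul (-z) x).mul (hPder x)).sub
      ((hasDerivAt_cexp_mul z x).mul (hQder x))
    have h3 := (hasDerivAt_cexp_mul z x).add (h2.div_const (2 * z))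
    convert h3 using 1
    · rfl
    · rfl
    rw [hf1]
    dsimp only
    have hzinv : z * z⁻¹ = 1 := mul_inv_cancel₀ hz0
    linear_combination (1 / (2 * z)) * hkeyPQ x +
      (Complex.exp (z * (x:ℂ)) * Q x + Complex.exp ((-z) * (x:ℂ)) * P x) / 2 * hzinv
  have hfc : Continuous f := Differentiable.continuous (fun x => (hfder x).differentiableAt)
  set f2 : ℝ → ℂ := fun x => z ^ 2 * f x + Complex.exp (z * x) * ψQ x with hf2
  have hf1der : ∀ x : ℝ, HasDerivAt f1 (f2 x) x := by
    intro x
    have h2 := ((hasDerivAt_cexp_mul (-z) x).mul (hPder x)).add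
      ((hasDerivAt_cexp_mul z x).mul (hQder x))
    have h3 := ((hasDerivAt_cexp_mul z x).const_mul z).sub (h2.div_const 2)
    convert h3 using 1
    · rfl
    · rfl
    rw [hf2, hf]
    dsimp only
    have hzinv : z * z⁻¹ = 1 := mul_inv_cancel₀ hz0
    linear_combination (-(1:ℂ)/2) * hkeyPQ x +
      (z * (Complex.exp ((-z) * (x:ℂ)) * P x - Complex.exp (z * (x:ℂ)) * Q x)) / 2 * hzinv
  have hf2c : Continuous f2 := by
    rw [hf2]
    exact (continuous_const.mul hfc).add
      ((Complex.continuous_exp.comp (continuous_const.mul Complex.continuous_ofReal)).mul hψQc)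
  -- smoothness within
  have huD := uniqueDiffOn_Ici (0:ℝ)
  have hDW : ∀ x ∈ Ici (0:ℝ), derivWithin f (Ici 0) x = f1 x := fun x hx =>
    ((hfder x).hasDerivWithinAt).derivWithin (huD x hx)
  have hDW1 : ∀ x ∈ Ici (0:ℝ), derivWithin f1 (Ici 0) x = f2 x := fun x hx =>
    ((hf1der x).hasDerivWithinAt).derivWithin (huD x hx)
  have hcd1 : ContDiffOn ℝ 1 f1 (Ici 0) := by
    have h10 : (1 : WithTop ℕ∞) = 0 + 1 := by norm_num
    rw [h10, contDiffOn_succ_iff_derivWithin huD]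
    refine ⟨fun x hx => ((hf1der x).hasDerivWithinAt).differentiableWithinAt, ?_, ?_⟩
    · intro h
      exact absurd h (by norm_num)
    · rw [contDiffOn_zero]
      exact (hf2c.continuousOn).congr hDW1
  have hcd : ContDiffOn ℝ 2 f (Ici 0) := by
    have h21 : (2 : WithTop ℕ∞) = 1 + 1 := by norm_num
    rw [h21, contDiffOn_succ_iff_derivWithin huD]
    refine ⟨fun x hx => ((hfder x).hasDerivWithinAt).differentiableWithinAt, ?_, ?_⟩
    · intro h
      exact absurd h (by norm_num)
    · exact hcd1.congr hDW
  have hiter : ∀ x ∈ Ici (0:ℝ), iteratedDerivWithin 2 f (Ici 0) x = f2 x := by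
    intro x hx
    have h2' : (2:ℕ) = 1 + 1 := rfl
    rw [h2', iteratedDerivWithin_succ]
    have e1 : EqOn (iteratedDerivWithin 1 f (Ici 0)) f1 (Ici 0) := by
      intro y hy
      rw [iteratedDerivWithin_one]
      exact hDW y hy
    rw [derivWithin_congr e1 (e1 hx)]
    exact hDW1 x hx
  -- asymptotics
  have hm1 : ∀ x : ℝ, 0 ≤ x → ‖m x - 1‖ ≤ Real.exp (-(2 * z.re * x)) * (Cm * PhiT z V x) := by
    intro x hx
    have hmx := hmeq x
    rw [max_eq_left hx] at hmx
    have hrw : m x - 1 = ∫ t in Ioi (0:ℝ), Ek z (t - x) * (V (max t 0) * m t) := by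
      rw [hmx]; ring
    rw [hrw]
    have hgint : IntegrableOn (fun t => Real.exp (-(2 * z.re * x)) * (phiK z V t * Cm))
        (Ioi x) volume :=
      ((hφi.mono_set (Ioi_subset_Ioi hx)).mul_const Cm).const_mul _
    have hbint := (hgint.integrable_indicator measurableSet_Ioi).restrict (s := Ioi (0:ℝ))
    refine le_trans (norm_integral_le_of_norm_le hbint ?_) ?_
    · filter_upwards [ae_restrict_mem measurableSet_Ioi] with t ht
      rcases le_or_gt t x with hle | hgt
      · rw [Ek_zero (by linarith : t - x ≤ 0), indicator_of_notMem
          (by simp only [mem_Ioi, not_lt]; exact hle)]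
        simp
      · rw [indicator_of_mem (by simpa using hgt)]
        have e1 : ‖Ek z (t - x)‖ ≤ Real.exp (-(2 * z.re * x)) * (Real.exp (2 * z.re * t) / az) := by
          refine le_trans (Ek_norm_le hz _) ?_
          apply le_of_eq
          rw [← mul_div_assoc, ← Real.exp_add]
          congr 2
          ring
        calc ‖Ek z (t - x) * (V (max t 0) * m t)‖
            = ‖Ek z (t - x)‖ * (‖V (max t 0)‖ * ‖m t‖) := by rw [norm_mul, norm_mul]
          _ ≤ (Real.exp (-(2 * z.re * x)) * (Real.exp (2 * z.re * t) / az)) *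
              (‖V (max t 0)‖ * Cm) := by
              refine mul_le_mul e1 (mul_le_mul_of_nonneg_left (hCm t) (norm_nonneg _))
                (mul_nonneg (norm_nonneg _) (norm_nonneg _))
                (mul_nonneg (Real.exp_nonneg _) (div_nonneg (Real.exp_nonneg _) haz.le))
          _ = Real.exp (-(2 * z.re * x)) * (phiK z V t * Cm) := by
              simp only [phiK]
              field_simp
              ring
    · rw [setIntegral_indicator measurableSet_Ioi, Ioi_inter_Ioi, max_eq_right hx,
        integral_const_mul, integral_mul_const]
      apply le_of_eq
      rw [PhiT]
      ring
  have hasymp : Tendsto (fun x : ℝ => (f x - Complex.exp (z * x)) * Real.exp (z.re * x))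
      atTop (𝓝 0) := by
    have hg : Tendsto (fun x : ℝ => Cm * PhiT z V x) atTop (𝓝 0) := by
      simpa using (PhiT_tendsto hVcont hVdec).const_mul Cm
    refine squeeze_zero_norm' ?_ hg
    filter_upwards [eventually_ge_atTop (0:ℝ)] with x hx
    have h1 : f x - Complex.exp (z * x) = Complex.exp (z * x) * (m x - 1) := by
      rw [hfm x hx]; ring
    rw [h1, norm_mul, norm_mul]
    have h2 : ‖Complex.exp (z * (x:ℂ))‖ = Real.exp (z.re * x) := norm_cexp_mul z x
    have h3 : ‖((Real.exp (z.re * x) : ℝ) : ℂ)‖ = Real.exp (z.re * x) := by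
      rw [Complex.norm_real, Real.norm_eq_abs, _root_.abs_of_nonneg (Real.exp_nonneg _)]
    rw [h2, h3]
    calc Real.exp (z.re * x) * ‖m x - 1‖ * Real.exp (z.re * x)
        ≤ Real.exp (z.re * x) * (Real.exp (-(2 * z.re * x)) * (Cm * PhiT z V x))
          * Real.exp (z.re * x) := by
          refine mul_le_mul_of_nonneg_right ?_ (Real.exp_nonneg _)
          exact mul_le_mul_of_nonneg_left (hm1 x hx) (Real.exp_nonneg _)
      _ = (Real.exp (z.re * x) * Real.exp (-(2 * z.re * x)) * Real.exp (z.re * x))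
          * (Cm * PhiT z V x) := by ring
      _ = Cm * PhiT z V x := by
          rw [← Real.exp_add, ← Real.exp_add, show z.re * x + -(2 * z.re * x) + z.re * x = 0 by ring,
            Real.exp_zero, one_mul]
  refine ⟨f, hcd, fun x hx => ?_, hasymp⟩
  rw [hiter x hx]
  have h4 : Complex.exp (z * x) * ψQ x = V x * f x := by
    rw [hψQ]
    dsimp only
    rw [max_eq_left hx, hfm x hx]
    ring
  rw [hf2]
  dsimp only
  rw [h4]
  ring
end stage4

section stage5
open MeasureTheory Complex Real Set Filter
open scoped Topology

variable {z : ℂ} {V : ℝ → ℂ} {g : ℝ → ℂ}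

lemma tendsto_rexp_neg_const {c : ℝ} (hc : 0 < c) :
    Tendsto (fun x : ℝ => Real.exp (-(c * x))) atTop (𝓝 0) := by
  have h4 : Tendsto (fun b : ℝ => c * b) atTop atTop :=
    Tendsto.const_mul_atTop hc tendsto_id
  exact (Real.tendsto_exp_neg_atTop_nhds_zero.comp h4).congr fun x => rfl

lemma second_deriv_within (hode : ∀ x ∈ Ici (0:ℝ),
      iteratedDerivWithin 2 g (Ici (0:ℝ)) x - (V x + z ^ 2) * g x = 0)
    (hgc2 : ContDiffOn ℝ 2 g (Ici (0:ℝ))) :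
    (∀ x ∈ Ici (0:ℝ), HasDerivWithinAt g (derivWithin g (Ici 0) x) (Ici (0:ℝ)) x) ∧
    ContinuousOn (derivWithin g (Ici 0)) (Ici (0:ℝ)) ∧
    (∀ x ∈ Ici (0:ℝ), HasDerivWithinAt (derivWithin g (Ici 0))
      ((V x + z ^ 2) * g x) (Ici (0:ℝ)) x) := by
  have huD := uniqueDiffOn_Ici (0:ℝ)
  have h21 : (2 : WithTop ℕ∞) = 1 + 1 := by norm_num
  rw [h21, contDiffOn_succ_iff_derivWithin huD] at hgc2
  obtain ⟨hgd, -, hgc1⟩ := hgc2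
  refine ⟨fun x hx => (hgd x hx).hasDerivWithinAt, hgc1.continuousOn, ?_⟩
  intro x hx
  have hgdd : DifferentiableOn ℝ (derivWithin g (Ici 0)) (Ici (0:ℝ)) :=
    hgc1.differentiableOn one_ne_zero
  have hD : HasDerivWithinAt (derivWithin g (Ici 0))
      (derivWithin (derivWithin g (Ici 0)) (Ici 0) x) (Ici (0:ℝ)) x :=
    (hgdd x hx).hasDerivWithinAt
  have e1 : EqOn (iteratedDerivWithin 1 g (Ici 0)) (derivWithin g (Ici 0)) (Ici (0:ℝ)) :=
    fun y hy => congrFun iteratedDerivWithin_one y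
  have e2 : iteratedDerivWithin 2 g (Ici 0) x
      = derivWithin (derivWithin g (Ici 0)) (Ici 0) x := by
    rw [show (2:ℕ) = 1 + 1 from rfl, iteratedDerivWithin_succ]
    exact derivWithin_congr e1 (e1 hx)
  have e3 : derivWithin (derivWithin g (Ici 0)) (Ici 0) x = (V x + z ^ 2) * g x := by
    rw [← e2]
    exact sub_eq_zero.mp (hode x hx)
  rwa [e3] at hD

lemma uniqueness_res (hz : 0 < z.re) (hVcont : ContinuousOn V (Ici 0))
    (hVdec : IntegrableOn (fun x => ‖V x‖ * Real.exp (2 * z.re * x))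
      (Ici (0:ℝ)) volume)
    {f : ℝ → ℂ} (hf : IsResonanceSolution V z f) (hg : IsResonanceSolution V z g) :
    EqOn g f (Ici (0:ℝ)) := by
  classical
  obtain ⟨hfc2, hfode, hftend⟩ := hf
  obtain ⟨hgc2, hgode, hgtend⟩ := hg
  set az := ‖z‖ with haz_def
  have haz : 0 < az := abs_z_pos hz
  have hz0 : z ≠ 0 := fun h => by rw [h] at hz; simp at hz
  have hreexpc : Continuous (fun x : ℝ => ((Real.exp (z.re * x) : ℝ) : ℂ)) :=
    Complex.continuous_ofReal.comp
      (Real.continuous_exp.comp (continuous_const.mul continuous_id))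
  have hcexpc : ∀ w : ℂ, Continuous (fun x : ℝ => Complex.exp (w * x)) := fun w =>
    Complex.continuous_exp.comp (continuous_const.mul Complex.continuous_ofReal)
  have huD := uniqueDiffOn_Ici (0:ℝ)
  obtain ⟨hfD, hf1c, hfD2⟩ := second_deriv_within hfode hfc2
  obtain ⟨hgD, hg1c, hgD2⟩ := second_deriv_within hgode hgc2
  set h : ℝ → ℂ := fun x => g x - f x with hh
  set h1 : ℝ → ℂ := fun x => derivWithin g (Ici 0) x - derivWithin f (Ici 0) x with hh1def
  have hhc : ContinuousOn h (Ici 0) := (hgc2.continuousOn).sub (hfc2.continuousOn)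
  have hh1c : ContinuousOn h1 (Ici 0) := hg1c.sub hf1c
  have hh1 : ∀ x ∈ Ici (0:ℝ), HasDerivWithinAt h (h1 x) (Ici 0) x :=
    fun x hx => (hgD x hx).sub (hfD x hx)
  have hh2 : ∀ x ∈ Ici (0:ℝ), HasDerivWithinAt h1 ((V x + z ^ 2) * h x) (Ici 0) x := by
    intro x hx
    have hD := (hgD2 x hx).sub (hfD2 x hx)
    have e : (V x + z ^ 2) * g x - (V x + z ^ 2) * f x = (V x + z ^ 2) * h x := by
      rw [hh]; ring
    rwa [e] at hD
  -- decay of h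
  have hhd : Tendsto (fun x : ℝ => h x * Real.exp (z.re * x)) atTop (𝓝 0) := by
    have h0 := hgtend.sub hftend
    simp only [sub_zero] at h0
    refine h0.congr fun x => ?_
    rw [hh]
    ring
  obtain ⟨Cb, hCb0, hCb⟩ := bounded_of_tendsto (hhc.mul hreexpc.continuousOn) hhd
  have hre : ∀ x : ℝ, ‖((Real.exp (z.re * x) : ℝ) : ℂ)‖ = Real.exp (z.re * x) := by
    intro x
    rw [Complex.norm_real, Real.norm_eq_abs, _root_.abs_of_nonneg (Real.exp_nonneg _)]
  have hCb' : ∀ x : ℝ, 0 ≤ x → ‖h x‖ ≤ Cb * Real.exp (-(z.re * x)) := by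
    intro x hx
    have hb := hCb x hx
    rw [Pi.mul_apply, norm_mul, hre x] at hb
    calc ‖h x‖ = (‖h x‖ * Real.exp (z.re * x)) * Real.exp (-(z.re * x)) := by
          rw [mul_assoc, ← Real.exp_add, add_neg_cancel, Real.exp_zero, mul_one]
      _ ≤ Cb * Real.exp (-(z.re * x)) := mul_le_mul_of_nonneg_right hb (Real.exp_nonneg _)
  -- integrable tail of ‖V‖
  have hVi : IntegrableOn (fun t => ‖V t‖) (Ioi 0) volume := by
    refine ((hVdec.mono_set Ioi_subset_Ici_self).mono' ?_ ?_)
    · exact ((hVcont.norm).mono Ioi_subset_Ici_self).aestronglyMeasurable measurableSet_Ioi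
    · filter_upwards [ae_restrict_mem measurableSet_Ioi] with t ht
      rw [Real.norm_eq_abs, _root_.abs_of_nonneg (norm_nonneg _)]
      have ht' : (0:ℝ) < t := ht
      have h1' : (1:ℝ) ≤ Real.exp (2 * z.re * t) := by
        rw [Real.one_le_exp_iff]; positivity
      have h2' : ‖V t‖ = ‖V t‖ := rfl
      rw [h2']
      nlinarith [norm_nonneg (V t)]
  set θ : ℝ → ℝ := fun x => ∫ t in Ioi x, ‖V t‖ with hθ
  have hθtend : Tendsto θ atTop (𝓝 0) := tendsto_tail hVi
  have hθnn : ∀ x : ℝ, 0 ≤ θ x :=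
    fun x => setIntegral_nonneg measurableSet_Ioi fun t _ => norm_nonneg _
  have hθmono : ∀ x y : ℝ, 0 ≤ x → x ≤ y → θ y ≤ θ x := by
    intro x y hx hxy
    refine setIntegral_mono_set (hVi.mono_set (Ioi_subset_Ioi hx)) ?_ ?_
    · exact Eventually.of_forall fun t => norm_nonneg _
    · exact HasSubset.Subset.eventuallyLE (Ioi_subset_Ioi hxy)
  -- ρ and its integrability
  set ρ : ℝ → ℂ := fun t => Complex.exp (z * t) * (V t * h t) with hρ
  have hρcOn : ContinuousOn ρ (Ici 0) := (hcexpc z).continuousOn.mul (hVcont.mul hhc)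
  have hρbd : ∀ t : ℝ, 0 ≤ t → ‖ρ t‖ ≤ Cb * ‖V t‖ := by
    intro t ht
    rw [hρ]
    dsimp only
    rw [norm_mul, norm_mul, norm_cexp_mul]
    calc Real.exp (z.re * t) * (‖V t‖ * ‖h t‖)
        ≤ Real.exp (z.re * t) * (‖V t‖ * (Cb * Real.exp (-(z.re * t)))) := by
          refine mul_le_mul_of_nonneg_left ?_ (Real.exp_nonneg _)
          exact mul_le_mul_of_nonneg_left (hCb' t ht) (norm_nonneg _)
      _ = (Real.exp (z.re * t) * Real.exp (-(z.re * t))) * (Cb * ‖V t‖) := by ring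
      _ = Cb * ‖V t‖ := by
          rw [← Real.exp_add, add_neg_cancel, Real.exp_zero, one_mul]
  have hρi : ∀ x : ℝ, 0 ≤ x → IntegrableOn ρ (Ioi x) volume := by
    intro x hx
    refine (((hVi.mono_set (Ioi_subset_Ioi hx)).const_mul Cb).mono'
      ((hρcOn.mono (fun t ht => le_trans hx (le_of_lt ht))).aestronglyMeasurable
        measurableSet_Ioi) ?_)
    filter_upwards [ae_restrict_mem measurableSet_Ioi] with t ht
    exact hρbd t (le_trans hx (le_of_lt ht))
  have hρtail : ∀ x : ℝ, 0 ≤ x → ‖∫ t in Ioi x, ρ t‖ ≤ Cb * θ x := by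
    intro x hx
    refine le_trans (norm_integral_le_of_norm_le
      ((hVi.mono_set (Ioi_subset_Ioi hx)).const_mul Cb) ?_) ?_
    · filter_upwards [ae_restrict_mem measurableSet_Ioi] with t ht
      exact hρbd t (le_trans hx (le_of_lt ht))
    · apply le_of_eq
      rw [integral_const_mul]
  -- q and its integral equation
  set p : ℝ → ℂ := fun x => h1 x - z * h x with hp
  set q : ℝ → ℂ := fun x => Complex.exp (z * x) * p x with hq
  have hqc : ContinuousOn q (Ici 0) :=
    (hcexpc z).continuousOn.mul (hh1c.sub (continuousOn_const.mul hhc))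
  have hqD : ∀ x ∈ Ici (0:ℝ), HasDerivWithinAt q (ρ x) (Ici 0) x := by
    intro x hx
    have hpD : HasDerivWithinAt p ((V x + z ^ 2) * h x - z * h1 x) (Ici 0) x :=
      (hh2 x hx).sub ((hh1 x hx).const_mul z)
    have hD := ((hasDerivAt_cexp_mul z x).hasDerivWithinAt).mul hpD
    convert hD using 1
    · rfl
    · rfl
    rw [hρ, hp]
    dsimp only
    ring
  have hqe : ∀ x : ℝ, 0 ≤ x → q x = q 0 + ∫ t in (0:ℝ)..x, ρ t := by
    intro x hx
    have hderiv : ∀ t ∈ Ioo (0:ℝ) x, HasDerivWithinAt q (ρ t) (Ioi t) t := by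
      intro t ht
      exact (hqD t (le_of_lt ht.1)).mono fun y hy => le_of_lt (lt_trans ht.1 hy)
    have hint : IntervalIntegrable ρ volume 0 x := by
      refine ContinuousOn.intervalIntegrable ?_
      rw [uIcc_of_le hx]
      exact hρcOn.mono Icc_subset_Ici_self
    have hftc := intervalIntegral.integral_eq_sub_of_hasDeriv_right_of_le hx
      (hqc.mono Icc_subset_Ici_self) hderiv hint
    rw [hftc]
    ring
  have hIρ := hρi 0 le_rfl
  set qinf : ℂ := q 0 + ∫ t in Ioi (0:ℝ), ρ t with hqinf
  have hqtail : ∀ x : ℝ, 0 ≤ x → q x = qinf - ∫ t in Ioi x, ρ t := by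
    intro x hx
    rw [hqe x hx, hqinf, split_tail hIρ hx]
    ring
  -- σ
  set σ : ℝ → ℂ := fun t => Complex.exp (-(2 * z * t)) * q t with hσ
  have h2zre : ∀ t : ℝ, (-(2 * z * (t:ℂ))).re = -(2 * z.re * t) := by
    intro t
    simp [Complex.mul_re]
  have hncexp2 : ∀ t : ℝ, ‖Complex.exp (-(2 * z * (t:ℂ)))‖ = Real.exp (-(2 * z.re * t)) := by
    intro t
    rw [Complex.norm_exp, h2zre]
  set Cq : ℝ := ‖qinf‖ + Cb * θ 0 with hCqdef
  have hCq0 : 0 ≤ Cq :=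
    add_nonneg (norm_nonneg _) (mul_nonneg hCb0 (hθnn 0))
  have hCq : ∀ t : ℝ, 0 ≤ t → ‖q t‖ ≤ Cq := by
    intro t ht
    rw [hqtail t ht]
    refine le_trans (norm_sub_le _ _) ?_
    rw [hCqdef]
    gcongr
    exact le_trans (hρtail t ht) (mul_le_mul_of_nonneg_left (hθmono 0 t le_rfl ht) hCb0)
  have hσbd : ∀ t : ℝ, 0 ≤ t → ‖σ t‖ ≤ Real.exp (-(2 * z.re * t)) * Cq := by
    intro t ht
    rw [hσ]
    dsimp only
    rw [norm_mul, hncexp2]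
    exact mul_le_mul_of_nonneg_left (hCq t ht) (Real.exp_nonneg _)
  have hσcOn : ContinuousOn σ (Ici 0) := by
    refine ContinuousOn.mul ?_ hqc
    exact (Complex.continuous_exp.comp
      ((continuous_const.mul Complex.continuous_ofReal).neg)).continuousOn
  have hσi : ∀ x : ℝ, 0 ≤ x → IntegrableOn σ (Ioi x) volume := by
    intro x hx
    refine ((intOn_rexp_neg (2 * z.re) (by positivity) x).mul_const Cq).mono'
      ((hσcOn.mono (fun t ht => le_trans hx (le_of_lt ht))).aestronglyMeasurable
        measurableSet_Ioi) ?_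
    filter_upwards [ae_restrict_mem measurableSet_Ioi] with t ht
    exact hσbd t (le_trans hx (le_of_lt ht))
  -- e^{-zx} h satisfies FTC with σ
  have hEh : ∀ x ∈ Ici (0:ℝ),
      HasDerivWithinAt (fun y : ℝ => Complex.exp ((-z) * y) * h y) (σ x) (Ici 0) x := by
    intro x hx
    have hD := ((hasDerivAt_cexp_mul (-z) x).hasDerivWithinAt).mul (hh1 x hx)
    convert hD using 1
    · rfl
    · rfl
    rw [hσ, hq, hp]
    dsimp only
    have hee : Complex.exp (-(2 * z * (x:ℂ))) * Complex.exp (z * (x:ℂ))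
        = Complex.exp ((-z) * (x:ℂ)) := by
      rw [← Complex.exp_add]; congr 1; ring
    linear_combination (h1 x - z * h x) * hee
  have hEhc : ContinuousOn (fun y : ℝ => Complex.exp ((-z) * y) * h y) (Ici 0) :=
    (hcexpc (-z)).continuousOn.mul hhc
  have hEhe : ∀ x : ℝ, 0 ≤ x →
      Complex.exp ((-z) * x) * h x = h 0 + ∫ t in (0:ℝ)..x, σ t := by
    intro x hx
    have hderiv : ∀ t ∈ Ioo (0:ℝ) x,
        HasDerivWithinAt (fun y : ℝ => Complex.exp ((-z) * y) * h y) (σ t) (Ioi t) t := by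
      intro t ht
      exact (hEh t (le_of_lt ht.1)).mono fun y hy => le_of_lt (lt_trans ht.1 hy)
    have hint : IntervalIntegrable σ volume 0 x := by
      refine ContinuousOn.intervalIntegrable ?_
      rw [uIcc_of_le hx]
      exact hσcOn.mono Icc_subset_Ici_self
    have hftc := intervalIntegral.integral_eq_sub_of_hasDeriv_right_of_le hx
      (hEhc.mono Icc_subset_Ici_self) hderiv hint
    have h00 : Complex.exp ((-z) * ((0:ℝ):ℂ)) * h 0 = h 0 := by
      norm_num
    rw [hftc, h00]
    ring
  have hIσ := hσi 0 le_rfl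
  have hlim1 : Tendsto (fun x : ℝ => Complex.exp ((-z) * x) * h x) atTop (𝓝 0) := by
    have hg0 : Tendsto (fun x : ℝ => Cb * Real.exp (-(2 * z.re * x))) atTop (𝓝 0) := by
      simpa using ((tendsto_rexp_neg_const (show (0:ℝ) < 2 * z.re by positivity)).const_mul Cb)
    refine squeeze_zero_norm' ?_ hg0
    filter_upwards [eventually_ge_atTop (0:ℝ)] with x hx
    rw [norm_mul, norm_cexp_mul]
    have e1 : (-z).re = -z.re := by simp
    rw [e1]
    calc Real.exp (-z.re * x) * ‖h x‖
        ≤ Real.exp (-z.re * x) * (Cb * Real.exp (-(z.re * x))) :=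
          mul_le_mul_of_nonneg_left (hCb' x hx) (Real.exp_nonneg _)
      _ = Cb * (Real.exp (-z.re * x) * Real.exp (-(z.re * x))) := by ring
      _ = Cb * Real.exp (-(2 * z.re * x)) := by
          congr 1
          rw [← Real.exp_add]
          congr 1
          ring
  have hc1 : h 0 + ∫ t in Ioi (0:ℝ), σ t = 0 := by
    have hlim2 : Tendsto (fun x : ℝ => h 0 + ∫ t in (0:ℝ)..x, σ t) atTop
        (𝓝 (h 0 + ∫ t in Ioi (0:ℝ), σ t)) :=
      tendsto_const_nhds.add (intervalIntegral_tendsto_integral_Ioi 0 hIσ (tendsto_id (α := ℝ)))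
    refine tendsto_nhds_unique (hlim2.congr' ?_) hlim1
    filter_upwards [eventually_ge_atTop (0:ℝ)] with x hx
    exact (hEhe x hx).symm
  have hrep : ∀ x : ℝ, 0 ≤ x → h x = -(Complex.exp (z * x) * ∫ t in Ioi x, σ t) := by
    intro x hx
    have e1 : Complex.exp ((-z) * x) * h x = -∫ t in Ioi x, σ t := by
      rw [hEhe x hx, split_tail hIσ hx]
      linear_combination hc1
    calc h x = Complex.exp (z * x) * (Complex.exp ((-z) * x) * h x) := by
          rw [← mul_assoc, ← Complex.exp_add,
            show z * (x:ℂ) + (-z) * x = 0 by ring, Complex.exp_zero, one_mul]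
      _ = -(Complex.exp (z * x) * ∫ t in Ioi x, σ t) := by rw [e1]; ring
  -- qinf = 0
  have hre2 : (0:ℝ) < ((2:ℂ) * z).re := by
    have e : ((2:ℂ) * z).re = 2 * z.re := by simp [Complex.mul_re]
    rw [e]; positivity
  have hCE : ∀ x : ℝ, ∫ t in Ioi x, Complex.exp (-(2 * z * t))
      = Complex.exp (-(2 * z * x)) / (2 * z) := fun x => integral_cexp_tail (2 * z) hre2 x
  have hCEi : ∀ x : ℝ, IntegrableOn (fun t : ℝ => Complex.exp (-(2 * z * t))) (Ioi x) volume :=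
    fun x => intOn_cexp_neg (2 * z) hre2 x
  have hqinf0 : qinf = 0 := by
    have hkey : ∀ x : ℝ, 0 ≤ x →
        ‖qinf‖ / (2 * az) ≤ ‖h x * ((Real.exp (z.re * x) : ℝ) : ℂ)‖
          + Cb * θ x / (2 * z.re) := by
      intro x hx
      have hDint : ‖(∫ t in Ioi x, σ t) - qinf * (Complex.exp (-(2 * z * x)) / (2 * z))‖
          ≤ Real.exp (-(2 * z.re * x)) / (2 * z.re) * (Cb * θ x) := by
        have e2 : (∫ t in Ioi x, σ t) - qinf * (Complex.exp (-(2 * z * x)) / (2 * z))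
            = ∫ t in Ioi x, (σ t - Complex.exp (-(2 * z * t)) * qinf) := by
          rw [integral_sub (hσi x hx) ((hCEi x).mul_const qinf), integral_mul_const, hCE x]
          ring
        rw [e2]
        refine le_trans (norm_integral_le_of_norm_le
          ((intOn_rexp_neg (2 * z.re) (by positivity) x).mul_const (Cb * θ x)) ?_) ?_
        · filter_upwards [ae_restrict_mem measurableSet_Ioi] with t ht
          have ht0 : 0 ≤ t := le_trans hx (le_of_lt ht)
          have e3 : σ t - Complex.exp (-(2 * z * t)) * qinf
              = Complex.exp (-(2 * z * t)) * (-(∫ s in Ioi t, ρ s)) := by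
            rw [hσ]
            dsimp only
            rw [hqtail t ht0]
            ring
          rw [e3, norm_mul, hncexp2, norm_neg]
          refine mul_le_mul_of_nonneg_left (le_trans (hρtail t ht0) (mul_le_mul_of_nonneg_left (hθmono x t hx (le_of_lt ht)) hCb0)) (Real.exp_nonneg _)
        · rw [integral_mul_const, integral_rexp_tail (2 * z.re) (by positivity) x]
      have h2az : ‖(2:ℂ) * z‖ = 2 * az := by
        rw [norm_mul, haz_def]
        norm_num
      have hnormCE : ‖qinf * (Complex.exp (-(2 * z * x)) / (2 * z))‖
          = ‖qinf‖ * (Real.exp (-(2 * z.re * x)) / (2 * az)) := by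
        rw [norm_mul, norm_div, hncexp2, h2az]
      have hA : ‖qinf‖ * (Real.exp (-(2 * z.re * x)) / (2 * az))
          ≤ ‖∫ t in Ioi x, σ t‖ + Real.exp (-(2 * z.re * x)) / (2 * z.re) * (Cb * θ x) := by
        have h4 := norm_sub_norm_le
          (qinf * (Complex.exp (-(2 * z * x)) / (2 * z))) (∫ t in Ioi x, σ t)
        rw [norm_sub_rev, hnormCE] at h4
        linarith [hDint]
      have hBval : ‖h x * ((Real.exp (z.re * x) : ℝ) : ℂ)‖
          = Real.exp (z.re * x) * Real.exp (z.re * x) * ‖∫ t in Ioi x, σ t‖ := by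
        rw [norm_mul, hre, hrep x hx, norm_neg, norm_mul, norm_cexp_mul]
        ring
      have h5 := mul_le_mul_of_nonneg_left hA (Real.exp_nonneg (2 * z.re * x))
      have hcancel : Real.exp (2 * z.re * x) * Real.exp (-(2 * z.re * x)) = 1 := by
        rw [← Real.exp_add, add_neg_cancel, Real.exp_zero]
      have hexp2 : Real.exp (z.re * x) * Real.exp (z.re * x) = Real.exp (2 * z.re * x) := by
        rw [← Real.exp_add]
        congr 1
        ring
      rw [hBval, hexp2]
      have e6 : Real.exp (2 * z.re * x) * (‖qinf‖ * (Real.exp (-(2 * z.re * x)) / (2 * az)))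
          = ‖qinf‖ / (2 * az) := by
        have e : Real.exp (2 * z.re * x) * (‖qinf‖ * (Real.exp (-(2 * z.re * x)) / (2 * az)))
            = (Real.exp (2 * z.re * x) * Real.exp (-(2 * z.re * x))) * ‖qinf‖ / (2 * az) := by
          ring
        rw [e, hcancel, one_mul]
      have e7 : Real.exp (2 * z.re * x) * (Real.exp (-(2 * z.re * x)) / (2 * z.re) * (Cb * θ x))
          = Cb * θ x / (2 * z.re) := by
        have e : Real.exp (2 * z.re * x) * (Real.exp (-(2 * z.re * x)) / (2 * z.re) * (Cb * θ x))
            = (Real.exp (2 * z.re * x) * Real.exp (-(2 * z.re * x))) * (Cb * θ x) / (2 * z.re) := by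
          ring
        rw [e, hcancel, one_mul]
      rw [mul_add, e6, e7] at h5
      linarith [h5]
    have hlim3 : Tendsto (fun x : ℝ => ‖h x * ((Real.exp (z.re * x) : ℝ) : ℂ)‖
        + Cb * θ x / (2 * z.re)) atTop (𝓝 0) := by
      have t1 : Tendsto (fun x : ℝ => ‖h x * ((Real.exp (z.re * x) : ℝ) : ℂ)‖) atTop (𝓝 0) := by
        simpa using hhd.norm
      have t2 : Tendsto (fun x : ℝ => Cb * θ x / (2 * z.re)) atTop (𝓝 0) := by
        have t3 := (hθtend.const_mul Cb).div_const (2 * z.re)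
        simpa using t3
      simpa using t1.add t2
    have h6 : ‖qinf‖ / (2 * az) ≤ 0 := by
      refine ge_of_tendsto hlim3 ?_
      filter_upwards [eventually_ge_atTop (0:ℝ)] with x hx
      exact hkey x hx
    have h7 : 0 ≤ ‖qinf‖ / (2 * az) := by positivity
    have h8 : ‖qinf‖ / (2 * az) = 0 := le_antisymm h6 h7
    rw [div_eq_zero_iff] at h8
    rcases h8 with h8 | h8
    · exact norm_eq_zero.mp h8
    · exfalso
      have : (0:ℝ) < 2 * az := by positivity
      linarith [this, h8.ge]
  -- induction : h = 0 on [x0, ∞)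
  obtain ⟨x0, hx01, hθx0⟩ : ∃ x0 : ℝ, 1 ≤ x0 ∧ θ x0 ≤ z.re := by
    have h1 : ∀ᶠ x in atTop, θ x < z.re := hθtend.eventually_lt_const hz
    obtain ⟨x0, hx0⟩ := (h1.and (eventually_ge_atTop 1)).exists
    exact ⟨x0, hx0.2, hx0.1.le⟩
  have hx00 : 0 ≤ x0 := le_trans zero_le_one hx01
  have hind : ∀ n : ℕ, ∀ x : ℝ, x0 ≤ x → ‖h x‖ ≤ Cb / 2 ^ n * Real.exp (-(z.re * x)) := by
    intro n
    induction n with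
    | zero => intro x hx; simpa using hCb' x (le_trans hx00 hx)
    | succ n ih =>
      have hqb : ∀ t : ℝ, x0 ≤ t → ‖q t‖ ≤ Cb / 2 ^ n * θ x0 := by
        intro t ht
        have ht0 : 0 ≤ t := le_trans hx00 ht
        rw [hqtail t ht0, hqinf0, zero_sub, norm_neg]
        refine le_trans (norm_integral_le_of_norm_le
          ((hVi.mono_set (Ioi_subset_Ioi ht0)).const_mul (Cb / 2 ^ n)) ?_) ?_
        · filter_upwards [ae_restrict_mem measurableSet_Ioi] with s hs
          have hs0 : x0 ≤ s := le_trans ht (le_of_lt hs)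
          rw [hρ]
          dsimp only
          rw [norm_mul, norm_mul, norm_cexp_mul]
          calc Real.exp (z.re * s) * (‖V s‖ * ‖h s‖)
              ≤ Real.exp (z.re * s) * (‖V s‖ * (Cb / 2 ^ n * Real.exp (-(z.re * s)))) := by
                refine mul_le_mul_of_nonneg_left ?_ (Real.exp_nonneg _)
                exact mul_le_mul_of_nonneg_left (ih s hs0) (norm_nonneg _)
            _ = (Real.exp (z.re * s) * Real.exp (-(z.re * s))) * (Cb / 2 ^ n * ‖V s‖) := by
                ring
            _ = Cb / 2 ^ n * ‖V s‖ := by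
                rw [← Real.exp_add, add_neg_cancel, Real.exp_zero, one_mul]
        · rw [integral_const_mul]
          refine mul_le_mul_of_nonneg_left (hθmono x0 t hx00 ht) ?_
          positivity
      intro x hx
      have hx0' : 0 ≤ x := le_trans hx00 hx
      rw [hrep x hx0', norm_neg, norm_mul, norm_cexp_mul]
      have hT : ‖∫ t in Ioi x, σ t‖
          ≤ Cb / 2 ^ n * θ x0 * (Real.exp (-(2 * z.re * x)) / (2 * z.re)) := by
        refine le_trans (norm_integral_le_of_norm_le
          ((intOn_rexp_neg (2 * z.re) (by positivity) x).mul_const (Cb / 2 ^ n * θ x0)) ?_) ?_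
        · filter_upwards [ae_restrict_mem measurableSet_Ioi] with t ht
          have ht0 : x0 ≤ t := le_trans hx (le_of_lt ht)
          rw [hσ]
          dsimp only
          rw [norm_mul, hncexp2]
          exact mul_le_mul_of_nonneg_left (hqb t ht0) (Real.exp_nonneg _)
        · rw [integral_mul_const, integral_rexp_tail (2 * z.re) (by positivity) x]
          apply le_of_eq
          ring
      calc Real.exp (z.re * x) * ‖∫ t in Ioi x, σ t‖
          ≤ Real.exp (z.re * x) * (Cb / 2 ^ n * θ x0 * (Real.exp (-(2 * z.re * x)) / (2 * z.re))) :=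
            mul_le_mul_of_nonneg_left hT (Real.exp_nonneg _)
        _ = (Cb / 2 ^ n * Real.exp (-(z.re * x))) * (θ x0 / (2 * z.re)) := by
            have he : Real.exp (z.re * x) * Real.exp (-(2 * z.re * x))
                = Real.exp (-(z.re * x)) := by
              rw [← Real.exp_add]
              congr 1
              ring
            rw [← he]
            ring
        _ ≤ (Cb / 2 ^ n * Real.exp (-(z.re * x))) * (1 / 2) := by
            refine mul_le_mul_of_nonneg_left ?_ (by positivity)
            rw [div_le_div_iff₀ (by positivity) (by norm_num)]
            linarith
        _ = Cb / 2 ^ (n + 1) * Real.exp (-(z.re * x)) := by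
            rw [pow_succ]
            ring
  have hzero : ∀ x : ℝ, x0 ≤ x → h x = 0 := by
    intro x hx
    have h1 : Tendsto (fun n : ℕ => Cb / 2 ^ n * Real.exp (-(z.re * x))) atTop (𝓝 0) := by
      have h2 : Tendsto (fun n : ℕ => (1 / 2 : ℝ) ^ n) atTop (𝓝 0) :=
        tendsto_pow_atTop_nhds_zero_of_lt_one (by norm_num) (by norm_num)
      have h3 := h2.const_mul (Cb * Real.exp (-(z.re * x)))
      rw [mul_zero] at h3
      refine h3.congr fun n => ?_
      rw [div_pow, one_pow]
      ring
    have h2 : ‖h x‖ ≤ 0 := ge_of_tendsto h1 (Eventually.of_forall fun n => hind n x hx)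
    exact norm_le_zero_iff.mp h2
  -- Gronwall backwards on [0, x0 + 1]
  set a : ℝ := x0 + 1 with hadef
  have hax0 : x0 < a := by rw [hadef]; linarith
  have ha0 : 0 < a := lt_of_le_of_lt hx00 hax0
  have hh1a : h1 a = 0 := by
    have hda : HasDerivAt h 0 a := by
      refine (hasDerivAt_const a (0:ℂ)).congr_of_eventuallyEq ?_
      filter_upwards [Ioi_mem_nhds hax0] with y hy
      exact hzero y (le_of_lt hy)
    have h1' : HasDerivWithinAt h (h1 a) (Ici 0) a := hh1 a (le_of_lt ha0)
    have h2' : HasDerivWithinAt h 0 (Ici 0) a := hda.hasDerivWithinAt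
    have := h1'.derivWithin (huD a (le_of_lt ha0))
    have h3' := h2'.derivWithin (huD a (le_of_lt ha0))
    rw [← this, h3']
  obtain ⟨K0, hK0⟩ := (isCompact_Icc (a := (0:ℝ)) (b := a)).exists_bound_of_continuousOn
    ((hVcont.mono Icc_subset_Ici_self).add continuousOn_const
      (g := fun _ : ℝ => z ^ 2))
  set K : ℝ := max K0 1 with hK
  have hK1 : 1 ≤ K := le_max_right _ _
  set F : ℝ → ℂ × ℂ := fun s => (h (a - s), h1 (a - s)) with hF
  have hmaps : ∀ s ∈ Icc (0:ℝ) a, a - s ∈ Icc (0:ℝ) a := by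
    intro s hs
    constructor <;> [linarith [hs.2]; linarith [hs.1]]
  have hFc : ContinuousOn F (Icc 0 a) := by
    have hsub : Continuous (fun s : ℝ => a - s) := continuous_const.sub continuous_id
    refine ContinuousOn.prodMk ?_ ?_
    · refine (hhc.mono (Icc_subset_Ici_self : Icc (0:ℝ) a ⊆ Ici 0)).comp
        hsub.continuousOn ?_
      intro s hs
      exact hmaps s hs
    · refine (hh1c.mono (Icc_subset_Ici_self : Icc (0:ℝ) a ⊆ Ici 0)).comp
        hsub.continuousOn ?_
      intro s hs
      exact hmaps s hs
  have hFd : ∀ s ∈ Ico (0:ℝ) a, HasDerivWithinAt F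
      (-h1 (a - s), -((V (a - s) + z ^ 2) * h (a - s))) (Ici s) s := by
    intro s hs
    have hxpos : 0 < a - s := by linarith [hs.2]
    have hsub : HasDerivAt (fun s : ℝ => a - s) (-1) s := by
      simpa using (hasDerivAt_const s a).fun_sub (hasDerivAt_id s)
    have hdh : HasDerivAt h (h1 (a - s)) (a - s) :=
      (hh1 (a - s) (le_of_lt hxpos)).hasDerivAt (Ici_mem_nhds hxpos)
    have hdh1 : HasDerivAt h1 ((V (a - s) + z ^ 2) * h (a - s)) (a - s) :=
      (hh2 (a - s) (le_of_lt hxpos)).hasDerivAt (Ici_mem_nhds hxpos)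
    have c1 : HasDerivAt (fun s : ℝ => h (a - s)) (-h1 (a - s)) s := by
      have := hdh.scomp s hsub
      simpa [Function.comp_def] using this
    have c2 : HasDerivAt (fun s : ℝ => h1 (a - s)) (-((V (a - s) + z ^ 2) * h (a - s))) s := by
      have := hdh1.scomp s hsub
      simpa [Function.comp_def] using this
    exact (c1.prodMk c2).hasDerivWithinAt
  have hFb : ∀ s ∈ Ico (0:ℝ) a,
      ‖(-h1 (a - s), -((V (a - s) + z ^ 2) * h (a - s)))‖ ≤ K * ‖F s‖ + 0 := by
    intro s hs
    have hmem : a - s ∈ Icc (0:ℝ) a := hmaps s ⟨hs.1, le_of_lt hs.2⟩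
    have hVb := hK0 (a - s) hmem
    have hK00 : 0 ≤ K0 := le_trans (norm_nonneg _) hVb
    show ‖(-h1 (a - s), -((V (a - s) + z ^ 2) * h (a - s)))‖
      ≤ K * ‖(h (a - s), h1 (a - s))‖ + 0
    rw [Prod.norm_def, Prod.norm_def, add_zero]
    simp only [norm_neg]
    refine max_le ?_ ?_
    · calc ‖h1 (a - s)‖ ≤ max ‖h (a - s)‖ ‖h1 (a - s)‖ := le_max_right _ _
        _ ≤ K * max ‖h (a - s)‖ ‖h1 (a - s)‖ := by
            nlinarith [le_max_left ‖h (a - s)‖ ‖h1 (a - s)‖, norm_nonneg (h (a - s)),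
              norm_nonneg (h1 (a - s)), hK1, le_max_right ‖h (a - s)‖ ‖h1 (a - s)‖]
    · calc ‖(V (a - s) + z ^ 2) * h (a - s)‖ = ‖V (a - s) + z ^ 2‖ * ‖h (a - s)‖ :=
            norm_mul _ _
        _ ≤ K * ‖h (a - s)‖ := by
            refine mul_le_mul_of_nonneg_right ?_ (norm_nonneg _)
            exact le_trans hVb (le_max_left _ _)
        _ ≤ K * max ‖h (a - s)‖ ‖h1 (a - s)‖ := by
            refine mul_le_mul_of_nonneg_left (le_max_left _ _) ?_
            linarith
  have hF0 : ‖F 0‖ ≤ 0 := by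
    show ‖(h (a - 0), h1 (a - 0))‖ ≤ 0
    rw [sub_zero, hzero a (le_of_lt hax0), hh1a]
    simp [Prod.norm_def]
  have hgron := norm_le_gronwallBound_of_norm_deriv_right_le hFc hFd hF0 hFb
  have hFzero : ∀ s ∈ Icc (0:ℝ) a, F s = 0 := by
    intro s hs
    have := hgron s hs
    rw [gronwallBound_ε0] at this
    simp only [zero_mul] at this
    exact norm_le_zero_iff.mp this
  intro x hx
  have hhx : h x = 0 := by
    rcases le_or_gt x a with hxa | hxa
    · have hs : a - x ∈ Icc (0:ℝ) a := ⟨by linarith, by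
        simp only [mem_Ici] at hx; linarith⟩
      have h0' := hFzero (a - x) hs
      have h1' := congrArg Prod.fst h0'
      simpa [hF] using h1'
    · exact hzero x (le_trans (le_of_lt hax0) (le_of_lt hxa))
  have : g x - f x = 0 := hhx

  exact sub_eq_zero.mp this
end stage5

theorem existence_uniqueness_resonance_solution
    (z : ℂ) (hz : 0 < z.re)
    (V : ℝ → ℂ) (hVcont : ContinuousOn V (Set.Ici (0 : ℝ)))
    (hVdec : IntegrableOn (fun x => ‖V x‖ * Real.exp (2 * z.re * x))
      (Set.Ici (0 : ℝ)) volume) :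
    ∃ f : ℝ → ℂ, IsResonanceSolution V z f ∧
      ∀ g : ℝ → ℂ, IsResonanceSolution V z g → Set.EqOn g f (Set.Ici (0 : ℝ)) := by
  obtain ⟨f, hf⟩ := exists_solution hz hVcont hVdec
  exact ⟨f, hf, fun g hg => uniqueness_res hz hVcont hVdec hf hg⟩
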